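/- Let n be a positive natural number, 0 < μ ≤ ε, ξ > 0, and 0 ≤ t ≤ T. Let φ : ℝ → ℝ be continuous and nonnegative with φ(x) ≤ a₀ + a₁x for all x ∈ ℝ, and let A₀ : ℝⁿ → ℝ be measurable and essentially bounded. For a measurable v : ℝⁿ → ℝ define P(v)(x) = A₀(x) · exp( t · (∫_{ℝⁿ} φ(v(y)) Γ_μ(x,y) dy) / (∫_{ℝⁿ} φ(v(y)) Γ_ε(x,y) dy + ξ) ). Then P(v) is essentially bounded with ‖P(v)‖_{L^∞(ℝⁿ)} ≤ ‖A₀‖_{L^∞(ℝⁿ)} · exp(T·(ε/μ)ⁿ). -/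

import Mathlib

/-!
Since `φ ≥ 0` lies below the affine function `a₀ + a₁ x` on all of `ℝ`, necessarily `a₁ = 0`, so
`φ ≤ a₀` and `φ ∘ v · Γ_ε(x, ·)` is integrable. For `μ ≤ ε` the kernels compare pointwise,
`Γ_μ ≤ (ε/μ)ⁿ Γ_ε`, so the quotient in the exponent lies in `[0, (ε/μ)ⁿ]` (the `+ ξ` only helps),
and the exponential factor is bounded by `exp (T (ε/μ)ⁿ)` uniformly in `x`.
-/

open Real MeasureTheory

/-- The Gaussian kernel `Γ_ν(x,y) = (2πν²)^{-n/2} · exp(−‖x−y‖₂²/(2ν²))` on `ℝⁿ`. -/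
noncomputable def gaussK (n : ℕ) (ν : ℝ) (x y : EuclideanSpace ℝ (Fin n)) : ℝ :=
  (2 * π * ν ^ 2) ^ (-(n : ℝ) / 2) * Real.exp (-‖x - y‖ ^ 2 / (2 * ν ^ 2))

theorem eq_zero_of_forall_nonneg_add_mul {a b : ℝ} (h : ∀ x, 0 ≤ a + b * x) : b = 0 := by
  by_contra hb
  have := h (-(a + 1) / b)
  rw [mul_div_cancel₀ _ hb] at this
  linarith

section GaussK

variable {n : ℕ} {μ ε ν : ℝ}

lemma gaussK_nonneg (x y : EuclideanSpace ℝ (Fin n)) : 0 ≤ gaussK n ν x y := by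
  unfold gaussK
  positivity

lemma gaussK_eq (hν : 0 < ν) (x y : EuclideanSpace ℝ (Fin n)) :
    gaussK n ν x y = (2 * π) ^ (-(n : ℝ) / 2) * (ν ^ n)⁻¹ * exp (-‖x - y‖ ^ 2 / (2 * ν ^ 2)) := by
  have hpow : (ν ^ 2) ^ (-(n : ℝ) / 2) = (ν ^ n)⁻¹ := by
    rw [← rpow_natCast ν 2, ← rpow_mul hν.le, ← rpow_natCast, ← rpow_neg hν.le]
    congr 1
    push_cast
    ring
  rw [gaussK, mul_rpow (by positivity) (by positivity), hpow]

lemma integrable_gaussK (hν : ν ≠ 0) (x : EuclideanSpace ℝ (Fin n)) :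
    Integrable (gaussK n ν x) := by
  have h := GaussianFourier.integral_rexp_neg_mul_sq_norm (V := EuclideanSpace ℝ (Fin n))
    (show 0 < 1 / (2 * ν ^ 2) by positivity)
  have hgauss : Integrable fun y : EuclideanSpace ℝ (Fin n) => exp (-(1 / (2 * ν ^ 2)) * ‖y‖ ^ 2) :=
    .of_integral_ne_zero (by rw [h]; positivity)
  refine ((hgauss.comp_sub_left x).const_mul ((2 * π * ν ^ 2) ^ (-(n : ℝ) / 2))).congr
    (ae_of_all _ fun y => ?_)
  simp only [gaussK]
  congr 2
  ring

lemma gaussK_le_mul_gaussK (hμ : 0 < μ) (hμε : μ ≤ ε) (x y : EuclideanSpace ℝ (Fin n)) :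
    gaussK n μ x y ≤ (ε / μ) ^ n * gaussK n ε x y := by
  have hε : 0 < ε := hμ.trans_le hμε
  rw [gaussK_eq hμ, gaussK_eq hε]
  calc (2 * π) ^ (-(n : ℝ) / 2) * (μ ^ n)⁻¹ * exp (-‖x - y‖ ^ 2 / (2 * μ ^ 2))
      ≤ (2 * π) ^ (-(n : ℝ) / 2) * (μ ^ n)⁻¹ * exp (-‖x - y‖ ^ 2 / (2 * ε ^ 2)) := by
        gcongr _ * exp ?_
        rw [neg_div, neg_div, neg_le_neg_iff]
        gcongr
    _ = _ := by rw [div_pow]; field_simp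

end GaussK

theorem integral_div_integral_add_mem_Icc {α : Type*} [MeasurableSpace α] {m : Measure α}
    {F G : α → ℝ} {c ξ : ℝ} (hF : ∀ y, 0 ≤ F y) (hG : ∀ y, 0 ≤ G y) (hFG : ∀ y, F y ≤ c * G y)
    (hGi : Integrable G m) (hc : 0 ≤ c) (hξ : 0 < ξ) :
    (∫ y, F y ∂m) / ((∫ y, G y ∂m) + ξ) ∈ Set.Icc 0 c := by
  have hden : 0 < (∫ y, G y ∂m) + ξ :=
    add_pos_of_nonneg_of_pos (integral_nonneg hG) hξ
  have hmono : ∫ y, F y ∂m ≤ c * ∫ y, G y ∂m := by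
    rw [← integral_const_mul]
    exact integral_mono_of_nonneg (ae_of_all _ hF) (hGi.const_mul c) (ae_of_all _ hFG)
  refine ⟨div_nonneg (integral_nonneg hF) hden.le, (div_le_iff₀ hden).2 ?_⟩
  nlinarith

theorem productivity_operator_Linfty_bound_general (n : ℕ)
    (μ ε ξ t T : ℝ) (hμ : 0 < μ) (hμε : μ ≤ ε) (hξ : 0 < ξ)
    (ht0 : 0 ≤ t) (htT : t ≤ T)
    (φ : ℝ → ℝ) (hφc : Continuous φ) (hφ0 : ∀ x, 0 ≤ φ x)
    (a₀ a₁ : ℝ) (hφlin : ∀ x, φ x ≤ a₀ + a₁ * x)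
    (A₀ : EuclideanSpace ℝ (Fin n) → ℝ)
    (v : EuclideanSpace ℝ (Fin n) → ℝ) (hv : Measurable v) :
    eLpNorm (fun x => A₀ x *
        Real.exp (t * ((∫ y, φ (v y) * gaussK n μ x y) /
          ((∫ y, φ (v y) * gaussK n ε x y) + ξ)))) ⊤ volume
      ≤ eLpNorm A₀ ⊤ volume * ENNReal.ofReal (Real.exp (T * (ε / μ) ^ n)) := by
  have hε : 0 < ε := hμ.trans_le hμε
  have hφ_le : ∀ x, φ x ≤ a₀ := fun x => by
    simpa [eq_zero_of_forall_nonneg_add_mul fun x => (hφ0 x).trans (hφlin x)] using hφlin x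
  have hexponent : ∀ x, t * ((∫ y, φ (v y) * gaussK n μ x y) /
      ((∫ y, φ (v y) * gaussK n ε x y) + ξ)) ≤ T * (ε / μ) ^ n := by
    intro x
    have hint : Integrable fun y => φ (v y) * gaussK n ε x y :=
      (integrable_gaussK hε.ne' x).bdd_mul (hφc.measurable.comp hv).aestronglyMeasurable
        (ae_of_all _ fun y => (norm_of_nonneg (hφ0 _)).trans_le (hφ_le _))
    obtain ⟨hratio0, hratio⟩ := integral_div_integral_add_mem_Icc
      (fun y => mul_nonneg (hφ0 _) (gaussK_nonneg x y))
      (fun y => mul_nonneg (hφ0 _) (gaussK_nonneg x y))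
      (fun y => by
        rw [mul_left_comm]
        exact mul_le_mul_of_nonneg_left (gaussK_le_mul_gaussK hμ hμε x y) (hφ0 _))
      hint (by positivity) hξ
    exact mul_le_mul htT hratio hratio0 (ht0.trans htT)
  refine (eLpNorm_le_mul_eLpNorm_of_ae_le_mul (ae_of_all _ fun x => ?_) ⊤).trans_eq (mul_comm _ _)
  rw [norm_mul, norm_of_nonneg (exp_pos _).le, mul_comm]
  exact mul_le_mul_of_nonneg_right (exp_le_exp.2 (hexponent x)) (norm_nonneg _)

/-- The endogenous productivity operator `P`, evaluated at time `t ∈ [0,T]`, is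
essentially bounded with `‖P(v)‖_{L^∞} ≤ ‖A₀‖_{L^∞} · exp(T(ε/μ)ⁿ)`. -/
theorem productivity_operator_Linfty_bound (n : ℕ) (hn : 0 < n)
    (μ ε ξ t T : ℝ) (hμ : 0 < μ) (hμε : μ ≤ ε) (hξ : 0 < ξ)
    (ht0 : 0 ≤ t) (htT : t ≤ T)
    (φ : ℝ → ℝ) (hφc : Continuous φ) (hφ0 : ∀ x, 0 ≤ φ x)
    (a₀ a₁ : ℝ) (hφlin : ∀ x, φ x ≤ a₀ + a₁ * x)
    (A₀ : EuclideanSpace ℝ (Fin n) → ℝ) (hA : Measurable A₀)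
    (hAbdd : MemLp A₀ ⊤ (volume : Measure (EuclideanSpace ℝ (Fin n))))
    (v : EuclideanSpace ℝ (Fin n) → ℝ) (hv : Measurable v) :
    eLpNorm (fun x => A₀ x *
        Real.exp (t * ((∫ y, φ (v y) * gaussK n μ x y) /
          ((∫ y, φ (v y) * gaussK n ε x y) + ξ)))) ⊤ volume
      ≤ eLpNorm A₀ ⊤ volume * ENNReal.ofReal (Real.exp (T * (ε / μ) ^ n)) :=
  productivity_operator_Linfty_bound_general n μ ε ξ t T hμ hμε hξ ht0 htT φ hφc hφ0 a₀ a₁ hφlin A₀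
    v hv
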